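/- arXiv:0906.3804 — 2 statements merged into one kernel-verified Lean document; each statement's English description precedes it below -/
import Mathlib

section
/- For every t ∈ [0,T], the function s ↦ ‖w(s)‖ / Y_s is differentiable at t with derivative −(‖w(t)‖ / Y_t) · 2a·Y_t² / ‖Z_t‖⁴. In particular, t ↦ ‖w(t)‖ / Y_t is nonincreasing on [0,T], and hence ‖w(t)‖ ≤ Y_t / Im z for all t ∈ [0,T]. -/
/-!
With `Z = h - U`, the imaginary part `Y = Im h` solves the linear equation `Y' = (a / ‖Z‖²) Y`
and `w' = (a / Z²) w`; both solutions are exponentials of integrals, so `Y > 0` and `w ≠ 0` on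
`[0, T]`. Hence `‖w‖ / Y` is differentiable, with logarithmic derivative
`Re (a / Z²) - a / ‖Z‖² = -2a (Im Z)² / ‖Z‖⁴ ≤ 0`, and comparing with its value `1 / Im z` at
time `0` gives the bound.
-/

open Set
open scoped RealInnerProductSpace

theorem HasDerivWithinAt.norm {F : Type*} [NormedAddCommGroup F] [InnerProductSpace ℝ F]
    {f : ℝ → F} {f' : F} {s : Set ℝ} {x : ℝ} (hf : HasDerivWithinAt f f' s x) (h0 : f x ≠ 0) :
    HasDerivWithinAt (fun t => ‖f t‖) (⟪f x, f'⟫ / ‖f x‖) s x := by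
  have hsq : ‖f x‖ ^ 2 ≠ 0 := by positivity
  convert (hf.norm_sq.sqrt hsq) using 1
  · simp only [Real.sqrt_sq (norm_nonneg _)]
  · rw [Real.sqrt_sq (norm_nonneg _)]
    ring

theorem HasDerivWithinAt.norm_of_eq_mul {w : ℝ → ℂ} {c : ℂ} {s : Set ℝ} {x : ℝ}
    (hw : HasDerivWithinAt w (c * w x) s x) (h0 : w x ≠ 0) :
    HasDerivWithinAt (fun t => ‖w t‖) (c.re * ‖w x‖) s x := by
  convert hw.norm h0 using 1
  rw [Complex.inner, mul_assoc, Complex.mul_conj, Complex.normSq_eq_norm_sq,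
    Complex.re_mul_ofReal]
  field_simp [norm_ne_zero_iff.2 h0]

theorem ContinuousOn.hasDerivWithinAt_integral_Icc {E : Type*} [NormedAddCommGroup E]
    [NormedSpace ℝ E] [CompleteSpace E] {a b : ℝ} {g : ℝ → E} (hg : ContinuousOn g (Icc a b))
    {t : ℝ} (ht : t ∈ Icc a b) :
    HasDerivWithinAt (fun u => ∫ s in a..u, g s) (g t) (Icc a b) t := by
  have : Fact (t ∈ Icc a b) := ⟨ht⟩
  refine intervalIntegral.integral_hasDerivWithinAt_right ?_
    (hg.stronglyMeasurableAtFilter_nhdsWithin measurableSet_Icc t) (hg t ht)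
  exact (hg.mono (uIcc_subset_Icc (left_mem_Icc.2 (ht.1.trans ht.2)) ht)).intervalIntegrable

theorem eq_of_hasDerivWithinAt_zero_Icc {E : Type*} [NormedAddCommGroup E] [NormedSpace ℝ E]
    {a b : ℝ} {f : ℝ → E} (hf : ∀ t ∈ Icc a b, HasDerivWithinAt f 0 (Icc a b) t) :
    ∀ t ∈ Icc a b, f t = f a :=
  constant_of_has_deriv_right_zero (fun t ht => (hf t ht).continuousWithinAt) fun t ht =>
    (hf t (Ico_subset_Icc_self ht)).mono_of_mem_nhdsWithin (Icc_mem_nhdsGE_of_mem ht)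

theorem eq_mul_cexp_integral_of_hasDerivWithinAt {a b : ℝ} {f g : ℝ → ℂ}
    (hg : ContinuousOn g (Icc a b))
    (hf : ∀ t ∈ Icc a b, HasDerivWithinAt f (g t * f t) (Icc a b) t) :
    ∀ t ∈ Icc a b, f t = f a * Complex.exp (∫ s in a..t, g s) := by
  have hconst : ∀ t ∈ Icc a b, HasDerivWithinAt
      (fun u => f u * Complex.exp (-∫ s in a..u, g s)) 0 (Icc a b) t := fun t ht =>
    ((hf t ht).mul (hg.hasDerivWithinAt_integral_Icc ht).neg.cexp).congr_deriv (by ring)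
  intro t ht
  have hft := eq_of_hasDerivWithinAt_zero_Icc hconst t ht
  simp only [intervalIntegral.integral_same, neg_zero, Complex.exp_zero, mul_one] at hft
  rw [← hft, mul_assoc, ← Complex.exp_add, neg_add_cancel, Complex.exp_zero, mul_one]

theorem eq_mul_exp_integral_of_hasDerivWithinAt {a b : ℝ} {f g : ℝ → ℝ}
    (hg : ContinuousOn g (Icc a b))
    (hf : ∀ t ∈ Icc a b, HasDerivWithinAt f (g t * f t) (Icc a b) t) :
    ∀ t ∈ Icc a b, f t = f a * Real.exp (∫ s in a..t, g s) := by
  intro t ht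
  have hft := eq_mul_cexp_integral_of_hasDerivWithinAt
    (f := fun s => (f s : ℂ)) (g := fun s => (g s : ℂ))
    (Complex.continuous_ofReal.comp_continuousOn hg)
    (fun s hs => by simpa using (hf s hs).ofReal_comp) t ht
  rw [intervalIntegral.integral_ofReal, ← Complex.ofReal_exp, ← Complex.ofReal_mul] at hft
  exact_mod_cast hft

theorem Complex.im_ofReal_div (r : ℝ) (ζ : ℂ) : ((r : ℂ) / ζ).im = -(r * ζ.im) / ‖ζ‖ ^ 2 := by
  rw [Complex.div_im, Complex.sq_norm]
  simp only [ofReal_im, zero_mul, zero_div, ofReal_re, zero_sub]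
  ring

theorem Complex.re_ofReal_div_sq_sub (r : ℝ) (ζ : ℂ) :
    ((r : ℂ) / ζ ^ 2).re - r / ‖ζ‖ ^ 2 = -(2 * r * ζ.im ^ 2 / ‖ζ‖ ^ 4) := by
  rcases eq_or_ne ζ 0 with rfl | hζ
  · simp
  have hN : Complex.normSq ζ ≠ 0 := (Complex.normSq_pos.2 hζ).ne'
  have hsq : (ζ ^ 2).re = ζ.re ^ 2 - ζ.im ^ 2 := by simp [pow_two]
  rw [div_eq_mul_inv, Complex.re_ofReal_mul, Complex.inv_re, hsq, map_pow,
    show (4 : ℕ) = 2 * 2 from rfl, pow_mul, Complex.sq_norm]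
  field_simp
  rw [Complex.normSq_apply]
  ring

def IsReverseLoewnerFlow (a : ℝ) (U : ℝ → ℝ) (T : ℝ) (h : ℝ → ℂ) : Prop :=
  ∀ t ∈ Icc 0 T, h t ≠ (U t : ℂ) ∧ HasDerivWithinAt h ((a : ℂ) / ((U t : ℂ) - h t)) (Icc 0 T) t

def IsReverseLoewnerSpatialDeriv (a : ℝ) (U : ℝ → ℝ) (T : ℝ) (h w : ℝ → ℂ) : Prop :=
  ∀ t ∈ Icc 0 T, HasDerivWithinAt w ((a : ℂ) * w t / ((U t : ℂ) - h t) ^ 2) (Icc 0 T) t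

namespace IsReverseLoewnerFlow

variable {a T : ℝ} {U : ℝ → ℝ} {h : ℝ → ℂ}

theorem continuousOn (hh : IsReverseLoewnerFlow a U T h) : ContinuousOn h (Icc 0 T) :=
  fun t ht => (hh t ht).2.continuousWithinAt

theorem continuousOn_driving_sub (hU : Continuous U) (hh : IsReverseLoewnerFlow a U T h) :
    ContinuousOn (fun s => (U s : ℂ) - h s) (Icc 0 T) :=
  (Complex.continuous_ofReal.comp hU).continuousOn.sub hh.continuousOn

theorem hasDerivWithinAt_im (hh : IsReverseLoewnerFlow a U T h) :
    ∀ t ∈ Icc 0 T, HasDerivWithinAt (fun s => (h s).im)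
      (a / ‖h t - U t‖ ^ 2 * (h t).im) (Icc 0 T) t := by
  intro t ht
  refine (Complex.imCLM.hasFDerivAt.comp_hasDerivWithinAt t (hh t ht).2).congr_deriv ?_
  rw [Complex.imCLM_apply, ← neg_sub, div_neg, Complex.neg_im, Complex.im_ofReal_div]
  simp only [Complex.sub_im, Complex.ofReal_im, sub_zero]
  ring

theorem im_pos (hU : Continuous U) (hz : 0 < (h 0).im) (hh : IsReverseLoewnerFlow a U T h) :
    ∀ t ∈ Icc 0 T, 0 < (h t).im := by
  have hρ : ContinuousOn (fun s => a / ‖(U s : ℂ) - h s‖ ^ 2) (Icc 0 T) :=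
    continuousOn_const.div ((hh.continuousOn_driving_sub hU).norm.pow 2)
      fun t ht => pow_ne_zero 2 (norm_ne_zero_iff.2 (sub_ne_zero.2 (hh t ht).1.symm))
  intro t ht
  rw [eq_mul_exp_integral_of_hasDerivWithinAt hρ
    (fun s hs => (hh.hasDerivWithinAt_im s hs).congr_deriv (by rw [norm_sub_rev])) t ht]
  positivity

end IsReverseLoewnerFlow

namespace IsReverseLoewnerSpatialDeriv

variable {a T : ℝ} {U : ℝ → ℝ} {h w : ℝ → ℂ}

theorem ne_zero (hU : Continuous U) (hw0 : w 0 = 1) (hh : IsReverseLoewnerFlow a U T h)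
    (hw : IsReverseLoewnerSpatialDeriv a U T h w) : ∀ t ∈ Icc 0 T, w t ≠ 0 := by
  have hq : ContinuousOn (fun s => (a : ℂ) / ((U s : ℂ) - h s) ^ 2) (Icc 0 T) :=
    continuousOn_const.div ((hh.continuousOn_driving_sub hU).pow 2)
      fun t ht => pow_ne_zero 2 (sub_ne_zero.2 (hh t ht).1.symm)
  intro t ht
  rw [eq_mul_cexp_integral_of_hasDerivWithinAt hq
    (fun s hs => (hw s hs).congr_deriv (mul_div_right_comm _ _ _)) t ht, hw0, one_mul]
  exact Complex.exp_ne_zero _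

theorem hasDerivWithinAt_norm_div_im (hU : Continuous U) (hz : 0 < (h 0).im) (hw0 : w 0 = 1)
    (hh : IsReverseLoewnerFlow a U T h) (hw : IsReverseLoewnerSpatialDeriv a U T h w) :
    ∀ t ∈ Icc 0 T, HasDerivWithinAt (fun s => ‖w s‖ / (h s).im)
      (-(‖w t‖ / (h t).im) * (2 * a * ((h t - (U t : ℂ)).im) ^ 2 / ‖h t - (U t : ℂ)‖ ^ 4))
      (Icc 0 T) t := by
  intro t ht
  have hnorm : HasDerivWithinAt (fun s => ‖w s‖)
      (((a : ℂ) / (h t - U t) ^ 2).re * ‖w t‖) (Icc 0 T) t :=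
    ((hw t ht).congr_deriv (by rw [mul_div_right_comm, ← neg_sub (h t), neg_sq])).norm_of_eq_mul
      (hw.ne_zero hU hw0 hh t ht)
  have hY : HasDerivWithinAt (fun s => (h s).im)
      (a / ‖h t - U t‖ ^ 2 * (h t).im) (Icc 0 T) t := hh.hasDerivWithinAt_im t ht
  refine (hnorm.div hY (hh.im_pos hU hz t ht).ne').congr_deriv ?_
  field_simp
  rw [Complex.re_ofReal_div_sq_sub]
  ring

end IsReverseLoewnerSpatialDeriv

theorem reverse_loewner_deriv_ratio_general
    (a : ℝ) (ha : 0 < a) (U : ℝ → ℝ) (hU : Continuous U)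
    (z : ℂ) (hz : 0 < z.im) (T : ℝ)
    (h w : ℝ → ℂ) (hh0 : h 0 = z) (hw0 : w 0 = 1)
    (hh : ∀ t ∈ Set.Icc 0 T, h t ≠ (U t : ℂ) ∧
      HasDerivWithinAt h ((a : ℂ) / ((U t : ℂ) - h t)) (Set.Icc 0 T) t)
    (hw : ∀ t ∈ Set.Icc 0 T,
      HasDerivWithinAt w ((a : ℂ) * w t / ((U t : ℂ) - h t) ^ 2) (Set.Icc 0 T) t) :
    (∀ t ∈ Set.Icc 0 T,
      HasDerivWithinAt (fun s => ‖w s‖ / (h s).im)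
        (-(‖w t‖ / (h t).im) *
          (2 * a * ((h t - (U t : ℂ)).im) ^ 2 / ‖h t - (U t : ℂ)‖ ^ 4))
        (Set.Icc 0 T) t) ∧
    AntitoneOn (fun s => ‖w s‖ / (h s).im) (Set.Icc 0 T) ∧
    (∀ t ∈ Set.Icc 0 T, ‖w t‖ ≤ (h t).im / z.im) := by
  subst hh0
  have hderiv := IsReverseLoewnerSpatialDeriv.hasDerivWithinAt_norm_div_im hU hz hw0 hh hw
  have hY := IsReverseLoewnerFlow.im_pos hU hz hh
  have hanti : AntitoneOn (fun s => ‖w s‖ / (h s).im) (Icc 0 T) := by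
    refine antitoneOn_of_hasDerivWithinAt_nonpos (convex_Icc 0 T)
      (fun t ht => (hderiv t ht).continuousWithinAt)
      (fun t ht => (hderiv t (interior_subset ht)).mono interior_subset) fun t ht => ?_
    have hYt := hY t (interior_subset ht)
    rw [neg_mul, neg_nonpos]
    positivity
  refine ⟨hderiv, hanti, fun t ht => ?_⟩
  have hle : ‖w t‖ / (h t).im ≤ ‖w 0‖ / (h 0).im := hanti ⟨le_rfl, ht.1.trans ht.2⟩ ht ht.1
  rw [hw0, norm_one, div_le_div_iff₀ (hY t ht) hz] at hle
  rwa [le_div_iff₀ hz, ← one_mul (h t).im]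

/-- For the reverse Loewner flow `h` and its spatial derivative process `w`
(`w(0) = 1`, `∂_t w = a·w/(U(t) - h(t))²`), the process `‖w(t)‖ / Y_t` (with
`Y_t = Im h(t)`) is differentiable with derivative
`-(‖w(t)‖/Y_t) · 2a Y_t² / ‖Z_t‖⁴`; in particular it is nonincreasing on `[0,T]`,
whence `‖w(t)‖ ≤ Y_t / Im z`. -/
theorem reverse_loewner_deriv_ratio
    (a : ℝ) (ha : 0 < a) (U : ℝ → ℝ) (hU : Continuous U)
    (z : ℂ) (hz : 0 < z.im) (T : ℝ) (hT : 0 < T)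
    (h w : ℝ → ℂ) (hh0 : h 0 = z) (hw0 : w 0 = 1)
    (hh : ∀ t ∈ Set.Icc 0 T, h t ≠ (U t : ℂ) ∧
      HasDerivWithinAt h ((a : ℂ) / ((U t : ℂ) - h t)) (Set.Icc 0 T) t)
    (hw : ∀ t ∈ Set.Icc 0 T,
      HasDerivWithinAt w ((a : ℂ) * w t / ((U t : ℂ) - h t) ^ 2) (Set.Icc 0 T) t) :
    (∀ t ∈ Set.Icc 0 T,
      HasDerivWithinAt (fun s => ‖w s‖ / (h s).im)
        (-(‖w t‖ / (h t).im) *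
          (2 * a * ((h t - (U t : ℂ)).im) ^ 2 / ‖h t - (U t : ℂ)‖ ^ 4))
        (Set.Icc 0 T) t) ∧
    AntitoneOn (fun s => ‖w s‖ / (h s).im) (Set.Icc 0 T) ∧
    (∀ t ∈ Set.Icc 0 T, ‖w t‖ ≤ (h t).im / z.im) :=
  reverse_loewner_deriv_ratio_general a ha U hU z hz T h w hh0 hw0 hh hw
end

section
/- Assume the moment condition, and assume in addition that the sequence of partitions is geometric, i.e. there exist C < ∞ and λ > 0 with δ_n ≤ C·e^{−λn} for all n. Then for every t ∈ Q, the sequence Θ_{t,n} converges almost surely (as well as in L²) to the limit Θ_t. -/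
open MeasureTheory Filter

/-- Setup for the discrete Doob–Meyer approximation scheme: a submartingale
`(L_t)_{t ∈ [0,1]}` with `L 0 = 0` with respect to a filtration `F`, an increasing
sequence of partitions `Q n = {r n 0 < ⋯ < r n (k n)}` of `[0,1]` with meshes
`δ n → 0`, and the associated increasing processes `Θ n`, defined on the points of
`Q n` by `Θ n 0 = 0` and
`Θ n (r n (j+1)) = Θ n (r n j) + 𝔼[L (r n (j+1)) - L (r n j) | F (r n j)]`. -/
structure DMSetup (Ω : Type) [m0 : MeasurableSpace Ω] (μ : Measure Ω) where
  F : Filtration ℝ m0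
  L : ℝ → Ω → ℝ
  hLadapted : ∀ t ∈ Set.Icc (0 : ℝ) 1, StronglyMeasurable[F t] (L t)
  hLint : ∀ t ∈ Set.Icc (0 : ℝ) 1, Integrable (L t) μ
  hLsub : ∀ s t : ℝ, s ∈ Set.Icc (0 : ℝ) 1 → t ∈ Set.Icc (0 : ℝ) 1 → s ≤ t →
    L s ≤ᵐ[μ] μ[L t | F s]
  hL0 : L 0 = 0
  k : ℕ → ℕ
  hk : ∀ n, 0 < k n
  r : ℕ → ℕ → ℝ
  hr0 : ∀ n, r n 0 = 0
  hr1 : ∀ n, r n (k n) = 1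
  hrmono : ∀ n, StrictMonoOn (r n) (Set.Iic (k n))
  hincr : ∀ n, ∀ j ≤ k n, ∃ i ≤ k (n + 1), r (n + 1) i = r n j
  δ : ℕ → ℝ
  hδ : ∀ n, ∀ j < k n, r n (j + 1) - r n j ≤ δ n
  hδ0 : Tendsto δ atTop (nhds 0)
  Θ : ℕ → ℝ → Ω → ℝ
  hΘ0 : ∀ n, Θ n 0 = 0
  hΘrec : ∀ n, ∀ j < k n,
    Θ n (r n (j + 1)) = Θ n (r n j) + μ[L (r n (j + 1)) - L (r n j) | F (r n j)]

/-- The moment condition: each `Θ n` is square-integrable at the partition points, and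
`𝔼[(Θ_{t,n} - Θ_{s,n})²] ≤ c (t - s)^(β+1)` for all `s < t` in `Q n`. -/
def DMSetup.MomentCond {Ω : Type} [m0 : MeasurableSpace Ω] {μ : Measure Ω}
    (S : DMSetup Ω μ) (c β : ℝ) : Prop :=
  (∀ n, ∀ j ≤ S.k n, MemLp (S.Θ n (S.r n j)) 2 μ) ∧
  (∀ n, ∀ i j : ℕ, i ≤ j → j ≤ S.k n →
    (∫ ω, (S.Θ n (S.r n j) ω - S.Θ n (S.r n i) ω) ^ 2 ∂μ) ≤
      c * (S.r n j - S.r n i) ^ (β + 1))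

/-!
Refining `Q n` to `Q (n + 1)` changes `Θ` at a point `t = r n j` of `Q n` by
`∑_{i<j} (Z i - 𝔼[Z i | 𝓕 (r n i)])`, where `Z i` is the increment of `Θ (n + 1)` over the
`i`-th interval of `Q n`: `Z i` and the increment of `Θ n` there both have the conditional
expectation of the increment of `L`. These summands are martingale differences, hence
orthogonal in `L²`, and the moment condition bounds the square norm of the `i`-th one by
`c δ n ^ β (r n (i + 1) - r n i)`, so `‖Θ (n + 1) t - Θ n t‖₂ ≤ √c δ n ^ (β / 2)`. For a
geometric sequence of partitions these bounds are summable, and a sequence with summable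
`L²` increments converges almost surely and in `L²`.
-/

theorem summable_rpow_of_le_mul_exp {a : ℕ → ℝ} {C lam γ : ℝ} (ha : ∀ n, 0 ≤ a n)
    (hlam : 0 < lam) (hγ : 0 < γ) (h : ∀ n, a n ≤ C * Real.exp (-(lam * n))) :
    Summable fun n => a n ^ γ := by
  have hC : 0 ≤ C := by simpa using (ha 0).trans (h 0)
  refine ((summable_geometric_of_lt_one (Real.exp_pos _).le
    (Real.exp_lt_one_iff.2 (neg_neg_of_pos (mul_pos hlam hγ)))).mul_left (C ^ γ)).of_nonneg_of_le
    (fun n => Real.rpow_nonneg (ha n) γ) fun n => ?_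
  calc a n ^ γ ≤ (C * Real.exp (-(lam * n))) ^ γ := Real.rpow_le_rpow (ha n) (h n) hγ.le
    _ = C ^ γ * Real.exp (-(lam * γ)) ^ n := by
      rw [Real.mul_rpow hC (Real.exp_pos _).le, ← Real.exp_mul, ← Real.exp_nat_mul]
      ring_nf

namespace MeasureTheory

section SummableIncrements

variable {Ω E : Type*} [MeasurableSpace Ω] {μ : Measure Ω} [NormedAddCommGroup E]
  {p : ENNReal} {u : ℕ → Ω → E}

theorem eLpNorm_sub_le_tsum_eLpNorm_sub (hp : 1 ≤ p) (hu : ∀ n, AEStronglyMeasurable (u n) μ)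
    {n m : ℕ} (hnm : n ≤ m) :
    eLpNorm (u m - u n) p μ ≤ ∑' i, eLpNorm (u (i + n + 1) - u (i + n)) p μ := by
  simp only [add_comm _ n]
  calc eLpNorm (u m - u n) p μ
      = eLpNorm (∑ i ∈ Finset.range (m - n), (u (n + i + 1) - u (n + i))) p μ := by
        rw [← Finset.sum_Ico_eq_sum_range (fun i => u (i + 1) - u i), Finset.sum_Ico_sub _ hnm]
    _ ≤ ∑ i ∈ Finset.range (m - n), eLpNorm (u (n + i + 1) - u (n + i)) p μ :=
        eLpNorm_sum_le (fun i _ => (hu _).sub (hu _)) hp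
    _ ≤ _ := ENNReal.sum_le_tsum _

theorem ae_cauchySeq_of_tsum_eLpNorm_sub_ne_top [IsProbabilityMeasure μ] (hp : 1 ≤ p)
    (hu : ∀ n, AEStronglyMeasurable (u n) μ)
    (hsum : ∑' n, eLpNorm (u (n + 1) - u n) p μ ≠ ⊤) :
    ∀ᵐ ω ∂μ, CauchySeq fun n => u n ω := by
  have hmeas : ∀ n, AEMeasurable (fun ω => ‖u (n + 1) ω - u n ω‖ₑ) μ :=
    fun n => ((hu (n + 1)).sub (hu n)).enorm
  have hint : ∫⁻ ω, ∑' n, ‖u (n + 1) ω - u n ω‖ₑ ∂μ ≠ ⊤ := by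
    rw [lintegral_tsum hmeas]
    refine ne_top_of_le_ne_top hsum (ENNReal.tsum_le_tsum fun n => ?_)
    rw [← eLpNorm_one_eq_lintegral_enorm]
    exact eLpNorm_le_eLpNorm_of_exponent_le hp ((hu (n + 1)).sub (hu n))
  filter_upwards [ae_lt_top' (AEMeasurable.tsum hmeas) hint] with ω hω
  refine cauchySeq_of_edist_le_of_tsum_ne_top _ (fun n => ?_) hω.ne
  rw [edist_comm, edist_eq_enorm_sub]

theorem exists_tendsto_of_tsum_eLpNorm_sub_ne_top [CompleteSpace E] [IsProbabilityMeasure μ]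
    (hp : 1 ≤ p) (hu : ∀ n, MemLp (u n) p μ)
    (hsum : ∑' n, eLpNorm (u (n + 1) - u n) p μ ≠ ⊤) :
    ∃ g : Ω → E, MemLp g p μ ∧ (∀ᵐ ω ∂μ, Tendsto (fun n => u n ω) atTop (nhds (g ω))) ∧
      Tendsto (fun n => eLpNorm (u n - g) p μ) atTop (nhds 0) := by
  obtain ⟨g, hgm, hg⟩ := exists_stronglyMeasurable_limit_of_tendsto_ae (fun n => (hu n).1)
    ((ae_cauchySeq_of_tsum_eLpNorm_sub_ne_top hp (fun n => (hu n).1) hsum).mono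
      fun ω h => cauchySeq_tendsto_of_complete h)
  -- Fatou bounds the distance to the limit by the tail of the series of increments.
  have htail : ∀ n, eLpNorm (u n - g) p μ ≤ ∑' i, eLpNorm (u (i + n + 1) - u (i + n)) p μ := by
    intro n
    refine (Lp.eLpNorm_lim_le_liminf_eLpNorm (fun m => ((hu n).1.sub (hu m).1)) _
      (hg.mono fun ω h => tendsto_const_nhds.sub h)).trans ?_
    refine liminf_le_of_frequently_le' (eventually_atTop.2 ⟨n, fun m hm => ?_⟩).frequently
    rw [eLpNorm_sub_comm]
    exact eLpNorm_sub_le_tsum_eLpNorm_sub hp (fun k => (hu k).1) hm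
  have hlim : Tendsto (fun n => eLpNorm (u n - g) p μ) atTop (nhds 0) :=
    tendsto_of_tendsto_of_tendsto_of_le_of_le tendsto_const_nhds
      (ENNReal.tendsto_sum_nat_add _ hsum) (fun _ => zero_le) htail
  exact ⟨g, Lp.memLp_of_cauchy_tendsto hp hu g hgm.aestronglyMeasurable hlim, hg, hlim⟩

theorem MemLp.eLpNorm_two_eq_ofReal_sqrt {f : Ω → ℝ} (hf : MemLp f 2 μ) :
    eLpNorm f 2 μ = ENNReal.ofReal √(∫ ω, f ω ^ 2 ∂μ) := by
  rw [hf.eLpNorm_eq_integral_rpow_norm two_ne_zero ENNReal.ofNat_ne_top, Real.sqrt_eq_rpow]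
  simp [one_div]

theorem exists_tendsto_of_summable_sqrt_integral_sq_sub [IsProbabilityMeasure μ]
    {u : ℕ → Ω → ℝ} (hu : ∀ n, MemLp (u n) 2 μ)
    (hsum : Summable fun n => √(∫ ω, (u (n + 1) ω - u n ω) ^ 2 ∂μ)) :
    ∃ g : Ω → ℝ, (∀ᵐ ω ∂μ, Tendsto (fun n => u n ω) atTop (nhds (g ω))) ∧
      Tendsto (fun n => ∫ ω, (u n ω - g ω) ^ 2 ∂μ) atTop (nhds 0) := by
  have hsum' : ∑' n, eLpNorm (u (n + 1) - u n) 2 μ ≠ ⊤ := by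
    rw [tsum_congr fun n => ((hu (n + 1)).sub (hu n)).eLpNorm_two_eq_ofReal_sqrt]
    simp only [Pi.sub_apply]
    rw [← ENNReal.ofReal_tsum_of_nonneg (fun _ => Real.sqrt_nonneg _) hsum]
    exact ENNReal.ofReal_ne_top
  obtain ⟨g, hg, hae, hlim⟩ := exists_tendsto_of_tsum_eLpNorm_sub_ne_top one_le_two hu hsum'
  have hsq : ∀ n, ∫ ω, (u n ω - g ω) ^ 2 ∂μ = (eLpNorm (u n - g) 2 μ).toReal ^ 2 := fun n => by
    rw [((hu n).sub hg).eLpNorm_two_eq_ofReal_sqrt, ENNReal.toReal_ofReal (Real.sqrt_nonneg _),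
      Real.sq_sqrt (integral_nonneg fun _ => sq_nonneg _)]
    rfl
  refine ⟨g, hae, ?_⟩
  simpa [hsq] using ((ENNReal.tendsto_toReal ENNReal.zero_ne_top).comp hlim).pow 2

end SummableIncrements

section ConditionalExpectation

variable {Ω : Type*} {m m₀ : MeasurableSpace Ω} {μ : Measure[m₀] Ω} [IsFiniteMeasure μ]

theorem condExp_sub_condExp_ae_eq_zero (hm : m ≤ m₀) {X : Ω → ℝ} (hX : Integrable X μ) :
    μ[X - μ[X | m] | m] =ᵐ[μ] 0 := by
  filter_upwards [condExp_sub hX integrable_condExp m] with ω hω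
  rw [hω, Pi.sub_apply,
    condExp_of_stronglyMeasurable hm stronglyMeasurable_condExp integrable_condExp, sub_self]
  rfl

theorem integral_sq_sub_condExp_le (hm : m ≤ m₀) {X : Ω → ℝ} (hX : MemLp X 2 μ) :
    ∫ ω, (X ω - μ[X | m] ω) ^ 2 ∂μ ≤ ∫ ω, X ω ^ 2 ∂μ :=
  calc ∫ ω, (X ω - μ[X | m] ω) ^ 2 ∂μ = ∫ ω, ProbabilityTheory.condVar m X μ ω ∂μ :=
        (integral_condExp hm).symm
    _ ≤ ∫ ω, μ[X ^ 2 | m] ω ∂μ := integral_mono_ae ProbabilityTheory.integrable_condVar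
        integrable_condExp (ProbabilityTheory.condVar_ae_le_condExp_sq hm hX)
    _ = ∫ ω, X ω ^ 2 ∂μ := integral_condExp hm

theorem integral_mul_eq_zero_of_condExp_ae_eq_zero (hm : m ≤ m₀) {X Y : Ω → ℝ}
    (hX : StronglyMeasurable[m] X) (hXY : Integrable (X * Y) μ) (hY : Integrable Y μ)
    (hY0 : μ[Y | m] =ᵐ[μ] 0) : ∫ ω, X ω * Y ω ∂μ = 0 :=
  calc ∫ ω, X ω * Y ω ∂μ = ∫ ω, μ[X * Y | m] ω ∂μ := (integral_condExp hm).symm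
    _ = ∫ ω, (X * μ[Y | m]) ω ∂μ :=
        integral_congr_ae (condExp_mul_of_stronglyMeasurable_left hX hXY hY)
    _ = 0 := by
        rw [integral_congr_ae (EventuallyEq.rfl.mul hY0)]
        simp

theorem integral_sq_sum_range_eq_of_condExp_ae_eq_zero {ι : Type*} [Preorder ι]
    {F : Filtration ι m₀} {τ : ℕ → ι} {j : ℕ} (hτ : MonotoneOn τ (Set.Iic j))
    {Y : ℕ → Ω → ℝ} (hY : ∀ i < j, MemLp (Y i) 2 μ)
    (hYm : ∀ i < j, StronglyMeasurable[F (τ (i + 1))] (Y i))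
    (hY0 : ∀ i < j, μ[Y i | F (τ i)] =ᵐ[μ] 0) :
    ∫ ω, (∑ i ∈ Finset.range j, Y i ω) ^ 2 ∂μ = ∑ i ∈ Finset.range j, ∫ ω, Y i ω ^ 2 ∂μ := by
  induction j with
  | zero => simp
  | succ j ih =>
    set S : Ω → ℝ := fun ω => ∑ i ∈ Finset.range j, Y i ω
    have hS : MemLp S 2 μ := memLp_finsetSum _ fun i hi => hY i (by simp at hi; omega)
    have hSm : StronglyMeasurable[F (τ j)] S := by
      refine Finset.stronglyMeasurable_fun_sum _ fun i hi => ?_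
      have hij : i < j := Finset.mem_range.1 hi
      exact (hYm i (by omega)).mono
        (F.mono (hτ (Set.mem_Iic.2 (by omega)) (Set.mem_Iic.2 (by omega)) (by omega)))
    have hYj := hY j j.lt_succ_self
    have hcross : ∫ ω, S ω * Y j ω ∂μ = 0 :=
      integral_mul_eq_zero_of_condExp_ae_eq_zero (F.le _) hSm (hS.integrable_mul hYj)
        (hYj.integrable one_le_two) (hY0 j j.lt_succ_self)
    calc ∫ ω, (∑ i ∈ Finset.range (j + 1), Y i ω) ^ 2 ∂μ
        = ∫ ω, (S ω ^ 2 + 2 * (S ω * Y j ω) + Y j ω ^ 2) ∂μ := by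
          simp only [Finset.sum_range_succ, S]
          ring_nf
      _ = ∫ ω, S ω ^ 2 ∂μ + 2 * ∫ ω, S ω * Y j ω ∂μ + ∫ ω, Y j ω ^ 2 ∂μ := by
          have hS2 : Integrable (fun ω => S ω ^ 2) μ := hS.integrable_sq
          have hSY : Integrable (fun ω => 2 * (S ω * Y j ω)) μ :=
            (hS.integrable_mul hYj).const_mul 2
          have hS2Y : Integrable (fun ω => S ω ^ 2 + 2 * (S ω * Y j ω)) μ := hS2.add hSY
          rw [integral_add hS2Y hYj.integrable_sq, integral_add hS2 hSY,
            integral_const_mul]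
      _ = ∑ i ∈ Finset.range (j + 1), ∫ ω, Y i ω ^ 2 ∂μ := by
          rw [hcross, ih (hτ.mono (Set.Iic_subset_Iic.2 j.le_succ)) (fun i hi => hY i (by omega))
            (fun i hi => hYm i (by omega)) (fun i hi => hY0 i (by omega)), Finset.sum_range_succ]
          ring

end ConditionalExpectation

end MeasureTheory

namespace DMSetup

variable {Ω : Type} [MeasurableSpace Ω] {μ : Measure Ω} (S : DMSetup Ω μ)

/-- The partition `Q_n`. -/
def points (n : ℕ) : Set ℝ := {t | ∃ j ≤ S.k n, S.r n j = t}

noncomputable def drift (n p : ℕ) : Ω → ℝ := μ[S.L (S.r n (p + 1)) - S.L (S.r n p) | S.F (S.r n p)]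

variable {S}

theorem r_mem_points {n j : ℕ} (hj : j ≤ S.k n) : S.r n j ∈ S.points n := ⟨j, hj, rfl⟩

theorem points_mono : Monotone S.points :=
  monotone_nat_of_le_succ fun n => by
    rintro _ ⟨j, hj, rfl⟩
    exact S.hincr n j hj

theorem r_le_r {n i j : ℕ} (hij : i ≤ j) (hj : j ≤ S.k n) : S.r n i ≤ S.r n j :=
  (S.hrmono n).monotoneOn (Set.mem_Iic.2 (hij.trans hj)) (Set.mem_Iic.2 hj) hij

theorem points_subset_Icc (n : ℕ) : S.points n ⊆ Set.Icc 0 1 := by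
  rintro _ ⟨j, hj, rfl⟩
  exact ⟨S.hr0 n ▸ r_le_r j.zero_le hj, S.hr1 n ▸ r_le_r hj le_rfl⟩

theorem integrable_L {n : ℕ} {t : ℝ} (ht : t ∈ S.points n) : Integrable (S.L t) μ :=
  S.hLint t (points_subset_Icc n ht)

theorem delta_pos (n : ℕ) : 0 < S.δ n :=
  (sub_pos.2 (S.hrmono n (Set.mem_Iic.2 (Nat.zero_le _)) (Set.mem_Iic.2 (S.hk n))
    Nat.zero_lt_one)).trans_le (S.hδ n 0 (S.hk n))

theorem Θ_r_eq_sum {n j : ℕ} (hj : j ≤ S.k n) :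
    S.Θ n (S.r n j) = ∑ p ∈ Finset.range j, S.drift n p := by
  induction j with
  | zero => rw [S.hr0, S.hΘ0, Finset.sum_range_zero]
  | succ j ih => rw [S.hΘrec n j hj, ih (by omega), Finset.sum_range_succ, drift]

theorem stronglyMeasurable_Θ {n : ℕ} {t : ℝ} (ht : t ∈ S.points n) :
    StronglyMeasurable[S.F t] (S.Θ n t) := by
  obtain ⟨j, hj, rfl⟩ := ht
  rw [Θ_r_eq_sum hj]
  refine Finset.stronglyMeasurable_sum _ fun p hp => stronglyMeasurable_condExp.mono
    (S.F.mono (r_le_r (Finset.mem_range.1 hp).le hj))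

theorem condExp_Θ_sub [IsFiniteMeasure μ] {n : ℕ} {s t : ℝ} (hs : s ∈ S.points n)
    (ht : t ∈ S.points n) (hst : s ≤ t) :
    μ[S.Θ n t - S.Θ n s | S.F s] =ᵐ[μ] μ[S.L t - S.L s | S.F s] := by
  obtain ⟨a, ha, rfl⟩ := hs
  obtain ⟨b, hb, rfl⟩ := ht
  have hab : a ≤ b := ((S.hrmono n).le_iff_le ha hb).1 hst
  have hmem : ∀ p ∈ Finset.Ico a b, S.r n a ≤ S.r n p ∧ S.r n (p + 1) ∈ S.points n ∧
      S.r n p ∈ S.points n := fun p hp => by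
    obtain ⟨hap, hpb⟩ := Finset.mem_Ico.1 hp
    exact ⟨r_le_r hap (by omega), r_mem_points (by omega), r_mem_points (by omega)⟩
  rw [Θ_r_eq_sum hb, Θ_r_eq_sum ha, ← Finset.sum_Ico_eq_sub _ hab,
    ← Finset.sum_Ico_sub (fun p => S.L (S.r n p)) hab]
  refine (condExp_finsetSum (fun p _ => integrable_condExp) _).trans ?_
  refine (eventuallyEq_sum fun p hp => condExp_condExp_of_le (S.F.mono (hmem p hp).1)
    (S.F.le _)).trans ?_
  exact (condExp_finsetSum (fun p hp => (integrable_L (hmem p hp).2.1).sub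
    (integrable_L (hmem p hp).2.2)) _).symm

theorem Θ_succ_sub_Θ_ae_eq_sum [IsFiniteMeasure μ] {n j : ℕ} (hj : j ≤ S.k n) :
    (fun ω => S.Θ (n + 1) (S.r n j) ω - S.Θ n (S.r n j) ω) =ᵐ[μ] fun ω =>
      ∑ i ∈ Finset.range j, (S.Θ (n + 1) (S.r n (i + 1)) ω - S.Θ (n + 1) (S.r n i) ω -
        μ[S.Θ (n + 1) (S.r n (i + 1)) - S.Θ (n + 1) (S.r n i) | S.F (S.r n i)] ω) := by
  have hpts : ∀ i ≤ S.k n, S.r n i ∈ S.points (n + 1) :=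
    fun i hi => points_mono n.le_succ (r_mem_points hi)
  have hdrift := eventuallyEq_sum (s := Finset.range j) fun i hi =>
    (condExp_Θ_sub (hpts i (by simp at hi; omega)) (hpts (i + 1) (by simp at hi; omega))
      (r_le_r i.le_succ (by simp at hi; omega))).symm
  filter_upwards [hdrift] with ω hω
  rw [Finset.sum_sub_distrib, Finset.sum_range_sub (fun i => S.Θ (n + 1) (S.r n i) ω), S.hr0,
    S.hΘ0, Θ_r_eq_sum hj]
  simp only [drift, Finset.sum_apply] at hω ⊢
  rw [hω, Pi.zero_apply, sub_zero]

namespace MomentCond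

variable {c β : ℝ} (hmom : S.MomentCond c β)
include hmom

theorem memLp {n : ℕ} {t : ℝ} (ht : t ∈ S.points n) : MemLp (S.Θ n t) 2 μ := by
  obtain ⟨j, hj, rfl⟩ := ht
  exact hmom.1 n j hj

theorem nonneg : 0 ≤ c := by
  have h := hmom.2 0 0 (S.k 0) (Nat.zero_le _) le_rfl
  rw [S.hr1, S.hr0, sub_zero, Real.one_rpow, mul_one] at h
  exact (integral_nonneg fun _ => sq_nonneg _).trans h

theorem integral_sq_sub_le {n : ℕ} {s t : ℝ} (hs : s ∈ S.points n) (ht : t ∈ S.points n)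
    (hst : s ≤ t) : ∫ ω, (S.Θ n t ω - S.Θ n s ω) ^ 2 ∂μ ≤ c * (t - s) ^ (β + 1) := by
  obtain ⟨a, ha, rfl⟩ := hs
  obtain ⟨b, hb, rfl⟩ := ht
  exact hmom.2 n a b (((S.hrmono n).le_iff_le ha hb).1 hst) hb

theorem integral_sq_sub_condExp_Θ_sub_le [IsFiniteMeasure μ] (hβ : 0 ≤ β) {n : ℕ} {s t d : ℝ}
    (hs : s ∈ S.points n) (ht : t ∈ S.points n) (hst : s ≤ t) (hd : t - s ≤ d) :
    ∫ ω, ((S.Θ n t - S.Θ n s) ω - μ[S.Θ n t - S.Θ n s | S.F s] ω) ^ 2 ∂μ ≤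
      c * d ^ β * (t - s) :=
  calc ∫ ω, ((S.Θ n t - S.Θ n s) ω - μ[S.Θ n t - S.Θ n s | S.F s] ω) ^ 2 ∂μ
      ≤ ∫ ω, (S.Θ n t ω - S.Θ n s ω) ^ 2 ∂μ :=
        MeasureTheory.integral_sq_sub_condExp_le (S.F.le s) ((hmom.memLp ht).sub (hmom.memLp hs))
    _ ≤ c * (t - s) ^ (β + 1) := hmom.integral_sq_sub_le hs ht hst
    _ = c * (t - s) ^ β * (t - s) := by
        rw [Real.rpow_add_one' (sub_nonneg.2 hst) (by positivity), mul_assoc]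
    _ ≤ c * d ^ β * (t - s) := by
        have := hmom.nonneg
        have := sub_nonneg.2 hst
        gcongr

theorem integral_sq_Θ_succ_sub_le [IsFiniteMeasure μ] (hβ : 0 ≤ β) {n : ℕ} {t : ℝ}
    (ht : t ∈ S.points n) : ∫ ω, (S.Θ (n + 1) t ω - S.Θ n t ω) ^ 2 ∂μ ≤ c * S.δ n ^ β := by
  obtain ⟨j, hj, rfl⟩ := ht
  set Z : ℕ → Ω → ℝ := fun i => S.Θ (n + 1) (S.r n (i + 1)) - S.Θ (n + 1) (S.r n i)
  set Y : ℕ → Ω → ℝ := fun i => Z i - μ[Z i | S.F (S.r n i)]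
  have hpts : ∀ i ≤ S.k n, S.r n i ∈ S.points (n + 1) :=
    fun i hi => points_mono n.le_succ (r_mem_points hi)
  have hZ : ∀ i < j, MemLp (Z i) 2 μ := fun i hi =>
    (hmom.memLp (hpts _ (by omega))).sub (hmom.memLp (hpts _ (by omega)))
  have hY : ∀ i < j, MemLp (Y i) 2 μ := fun i hi => (hZ i hi).sub ((hZ i hi).condExp one_le_two)
  have hYm : ∀ i < j, StronglyMeasurable[S.F (S.r n (i + 1))] (Y i) := fun i hi =>
    ((stronglyMeasurable_Θ (hpts _ (by omega))).sub ((stronglyMeasurable_Θ (hpts _ (by omega))).mono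
      (S.F.mono (r_le_r i.le_succ (by omega))))).sub
      (stronglyMeasurable_condExp.mono (S.F.mono (r_le_r i.le_succ (by omega))))
  have hY0 : ∀ i < j, μ[Y i | S.F (S.r n i)] =ᵐ[μ] 0 := fun i hi =>
    condExp_sub_condExp_ae_eq_zero (S.F.le _) ((hZ i hi).integrable one_le_two)
  have hYle : ∀ i < j, ∫ ω, Y i ω ^ 2 ∂μ ≤ c * S.δ n ^ β * (S.r n (i + 1) - S.r n i) :=
    fun i hi => hmom.integral_sq_sub_condExp_Θ_sub_le hβ (hpts _ (by omega)) (hpts _ (by omega))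
      (r_le_r i.le_succ (by omega)) (S.hδ n i (by omega))
  calc ∫ ω, (S.Θ (n + 1) (S.r n j) ω - S.Θ n (S.r n j) ω) ^ 2 ∂μ
      = ∫ ω, (∑ i ∈ Finset.range j, Y i ω) ^ 2 ∂μ :=
        integral_congr_ae ((Θ_succ_sub_Θ_ae_eq_sum hj).fun_comp (· ^ 2))
    _ = ∑ i ∈ Finset.range j, ∫ ω, Y i ω ^ 2 ∂μ :=
        integral_sq_sum_range_eq_of_condExp_ae_eq_zero
          ((S.hrmono n).monotoneOn.mono (Set.Iic_subset_Iic.2 hj)) hY hYm hY0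
    _ ≤ ∑ i ∈ Finset.range j, c * S.δ n ^ β * (S.r n (i + 1) - S.r n i) :=
        Finset.sum_le_sum fun i hi => hYle i (Finset.mem_range.1 hi)
    _ = c * S.δ n ^ β * S.r n j := by rw [← Finset.mul_sum, Finset.sum_range_sub, S.hr0, sub_zero]
    _ ≤ c * S.δ n ^ β :=
        mul_le_of_le_one_right
          (mul_nonneg hmom.nonneg (Real.rpow_nonneg (S.delta_pos n).le β))
          (points_subset_Icc n (r_mem_points hj)).2

theorem sqrt_integral_sq_Θ_succ_sub_le [IsFiniteMeasure μ] (hβ : 0 ≤ β) {n : ℕ} {t : ℝ}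
    (ht : t ∈ S.points n) :
    √(∫ ω, (S.Θ (n + 1) t ω - S.Θ n t ω) ^ 2 ∂μ) ≤ √c * S.δ n ^ (β / 2) := by
  calc √(∫ ω, (S.Θ (n + 1) t ω - S.Θ n t ω) ^ 2 ∂μ) ≤ √(c * S.δ n ^ β) :=
        Real.sqrt_le_sqrt (hmom.integral_sq_Θ_succ_sub_le hβ ht)
    _ = √c * S.δ n ^ (β / 2) := by
        rw [Real.sqrt_mul hmom.nonneg, Real.sqrt_eq_rpow (S.δ n ^ β),
          ← Real.rpow_mul (S.delta_pos n).le]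
        ring_nf

end MomentCond

end DMSetup

/-- Under the moment condition, if the sequence of partitions is geometric (i.e.
`δ n ≤ C e^{-λ n}` for some `C < ∞` and `λ > 0`), then for every `t ∈ Q` the sequence
`Θ_{t,n}` converges almost surely, as well as in `L²(μ)`, to the limit `Θ_t`. -/
theorem dm_as_convergence_geometric
    {Ω : Type} [m0 : MeasurableSpace Ω] {μ : Measure Ω} [IsProbabilityMeasure μ]
    (S : DMSetup Ω μ) (c β : ℝ) (hβ : 0 < β) (hmom : S.MomentCond c β)
    (hgeo : ∃ C lam : ℝ, 0 < lam ∧ ∀ n : ℕ, S.δ n ≤ C * Real.exp (-(lam * n))) :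
    ∃ Θ : ℝ → Ω → ℝ, ∀ t : ℝ, (∃ n, ∃ j ≤ S.k n, S.r n j = t) →
      Tendsto (fun n => ∫ ω, (S.Θ n t ω - Θ t ω) ^ 2 ∂μ) atTop (nhds 0) ∧
      ∀ᵐ ω ∂μ, Tendsto (fun n => S.Θ n t ω) atTop (nhds (Θ t ω)) := by
  obtain ⟨C, lam, hlam, hgeo⟩ := hgeo
  have hsum : Summable fun n => √c * S.δ n ^ (β / 2) :=
    (summable_rpow_of_le_mul_exp (fun n => (S.delta_pos n).le) hlam (half_pos hβ) hgeo).mul_left _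
  have hlim : ∀ t, (∃ m, t ∈ S.points m) → ∃ g : Ω → ℝ,
      Tendsto (fun n => ∫ ω, (S.Θ n t ω - g ω) ^ 2 ∂μ) atTop (nhds 0) ∧
      ∀ᵐ ω ∂μ, Tendsto (fun n => S.Θ n t ω) atTop (nhds (g ω)) := by
    rintro t ⟨m, ht⟩
    have hpts : ∀ n, t ∈ S.points (n + m) := fun n => S.points_mono (Nat.le_add_left m n) ht
    obtain ⟨g, hae, hL2⟩ := exists_tendsto_of_summable_sqrt_integral_sq_sub
      (fun n => hmom.memLp (hpts n)) ((hsum.comp_injective (add_left_injective m)).of_nonneg_of_le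
        (fun _ => Real.sqrt_nonneg _) fun n => by
          rw [Nat.add_right_comm]
          exact hmom.sqrt_integral_sq_Θ_succ_sub_le hβ.le (hpts n))
    exact ⟨g, (tendsto_add_atTop_iff_nat m).1 hL2,
      hae.mono fun ω h => (tendsto_add_atTop_iff_nat m).1 h⟩
  choose! Θ hΘ using hlim
  exact ⟨Θ, hΘ⟩
end
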